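/- arXiv:1707.08272 — 2 statements merged into one kernel-verified Lean document; each statement's English description precedes it below -/
import Mathlib

section
/- For any bipartite graph G with n ≥ 2 vertices and any edge (u, v) ∈ E, the number of maximal bicliques of G that contain both u and v is at most g(n−2). -/
/-- `(X, Y)` is a biclique of the bipartite graph with parts `L`, `R` and edge set `E`:
`X ⊆ L`, `Y ⊆ R`, and every vertex of `X` is joined to every vertex of `Y`. -/
def IsBiclique {V : Type*} (L R : Finset V) (E : Finset (V × V))
    (B : Finset V × Finset V) : Prop :=
  B.1 ⊆ L ∧ B.2 ⊆ R ∧ ∀ x ∈ B.1, ∀ y ∈ B.2, (x, y) ∈ E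

/-- `(X, Y)` is a maximal biclique: it is a biclique, and no other biclique contains it
componentwise. -/
def IsMaximalBiclique {V : Type*} (L R : Finset V) (E : Finset (V × V))
    (B : Finset V × Finset V) : Prop :=
  IsBiclique L R E B ∧
    ∀ B' : Finset V × Finset V, IsBiclique L R E B' → B.1 ⊆ B'.1 → B.2 ⊆ B'.2 → B' = B

/-- `BC L R E` is the set of maximal bicliques of the bipartite graph `(L, R, E)`. -/
def BC {V : Type*} (L R : Finset V) (E : Finset (V × V)) : Set (Finset V × Finset V) :=
  {B | IsMaximalBiclique L R E B}

/-- `g m` is the maximum number of maximal bicliques over all bipartite graphs with `m`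
vertices. -/
noncomputable def g (m : ℕ) : ℕ :=
  sSup {k : ℕ | ∃ (W : Type) (L R : Finset W) (E : Finset (W × W)),
    Disjoint L R ∧ E ⊆ L ×ˢ R ∧ L.card + R.card = m ∧ (BC L R E).ncard = k}

lemma bc_finite {V : Type*} (L R : Finset V) (E : Finset (V × V)) :
    (BC L R E).Finite := by
  classical
  apply Set.Finite.subset (L.powerset ×ˢ R.powerset).finite_toSet
  rintro ⟨X, Y⟩ hB
  simp only [Finset.coe_product, Set.mem_prod, Finset.mem_coe, Finset.mem_powerset]
  exact ⟨hB.1.1, hB.1.2.1⟩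

lemma bc_fst_injOn {V : Type*} (L R : Finset V) (E : Finset (V × V)) :
    Set.InjOn Prod.fst (BC L R E) := by
  classical
  rintro ⟨X, Y⟩ hB ⟨X', Y'⟩ hB' (h : X = X')
  subst h
  have key : ∀ Y Y' : Finset V, IsMaximalBiclique L R E (X, Y) →
      IsMaximalBiclique L R E (X, Y') → Y' ⊆ Y := by
    intro Y Y' hB hB'
    have hbic : IsBiclique L R E (X, Y ∪ Y') := by
      refine ⟨hB.1.1, Finset.union_subset hB.1.2.1 hB'.1.2.1, ?_⟩
      intro x hx y hy
      rcases Finset.mem_union.mp hy with hy | hy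
      · exact hB.1.2.2 x hx y hy
      · exact hB'.1.2.2 x hx y hy
    have := hB.2 (X, Y ∪ Y') hbic Finset.Subset.rfl Finset.subset_union_left
    have h2 : Y ∪ Y' = Y := congrArg Prod.snd this
    intro y hy
    rw [← h2]
    exact Finset.mem_union_right _ hy
  exact Prod.ext rfl (Finset.Subset.antisymm (key Y' Y hB' hB) (key Y Y' hB hB'))

lemma bc_ncard_le {V : Type*} (L R : Finset V) (E : Finset (V × V)) :
    (BC L R E).ncard ≤ 2 ^ (L.card + R.card) := by
  classical
  have h : (BC L R E).ncard ≤ (↑L.powerset : Set (Finset V)).ncard := by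
    apply Set.ncard_le_ncard_of_injOn Prod.fst ?_ (bc_fst_injOn L R E)
      (L.powerset.finite_toSet)
    intro B hB
    simpa using hB.1.1
  calc (BC L R E).ncard ≤ (↑L.powerset : Set (Finset V)).ncard := h
    _ = L.powerset.card := Set.ncard_coe_finset _
    _ = 2 ^ L.card := Finset.card_powerset _
    _ ≤ 2 ^ (L.card + R.card) := Nat.pow_le_pow_right (by norm_num) (Nat.le_add_right _ _)

lemma g_ge {L R : Finset ℕ} {E : Finset (ℕ × ℕ)} (hd : Disjoint L R) (hE : E ⊆ L ×ˢ R) :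
    (BC L R E).ncard ≤ g (L.card + R.card) := by
  apply le_csSup
  · refine ⟨2 ^ (L.card + R.card), ?_⟩
    rintro k ⟨W, L', R', E', _, _, hcard, hk⟩
    rw [← hk, ← hcard]
    exact bc_ncard_le L' R' E'
  · exact ⟨ℕ, L, R, E, hd, hE, rfl, rfl⟩

lemma image_cancel {V : Type*} [DecidableEq V] {s t₁ t₂ : Finset V} {f : V → ℕ}
    (hf : Set.InjOn f ↑s) (h1 : t₁ ⊆ s) (h2 : t₂ ⊆ s)
    (h : t₁.image f = t₂.image f) : t₁ = t₂ := by
  apply Finset.coe_injective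
  rw [← (hf.image_eq_image_iff (Finset.coe_subset.mpr h1) (Finset.coe_subset.mpr h2))]
  rw [← Finset.coe_image, ← Finset.coe_image, h]

lemma bc_relabel {V : Type*} [DecidableEq V] (L R : Finset V) (E : Finset (V × V)) (hE : E ⊆ L ×ˢ R)
    (f : V → ℕ) (hf : Set.InjOn f ↑(L ∪ R)) :
    (BC L R E).ncard ≤ (BC (L.image f) (R.image f) (E.image (Prod.map f f))).ncard := by
  classical
  apply Set.ncard_le_ncard_of_injOn (fun B => (B.1.image f, B.2.image f)) ?_ ?_
    (bc_finite _ _ _)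
  · rintro ⟨X, Y⟩ hB
    obtain ⟨⟨hXL, hYR, hedge⟩, hmax⟩ := hB
    refine ⟨⟨Finset.image_subset_image hXL, Finset.image_subset_image hYR, ?_⟩, ?_⟩
    · intro a ha b hb
      obtain ⟨x, hx, rfl⟩ := Finset.mem_image.mp ha
      obtain ⟨y, hy, rfl⟩ := Finset.mem_image.mp hb
      exact Finset.mem_image.mpr ⟨(x, y), hedge x hx y hy, rfl⟩
    · rintro ⟨X', Y'⟩ ⟨hX'L, hY'R, hedge'⟩ hs1 hs2
      have hP : (L.filter (fun x => f x ∈ X'), R.filter (fun y => f y ∈ Y')) = (X, Y) := by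
        apply hmax
        · refine ⟨Finset.filter_subset _ _, Finset.filter_subset _ _, ?_⟩
          intro x hx y hy
          obtain ⟨hxL, hxX'⟩ := Finset.mem_filter.mp hx
          obtain ⟨hyR, hyY'⟩ := Finset.mem_filter.mp hy
          have := hedge' (f x) hxX' (f y) hyY'
          obtain ⟨⟨a, b⟩, hab, habe⟩ := Finset.mem_image.mp this
          obtain ⟨haL, hbR⟩ := Finset.mem_product.mp (hE hab)
          have ha : f a = f x := congrArg Prod.fst habe
          have hb : f b = f y := congrArg Prod.snd habe
          have hax : a = x := hf (Finset.mem_coe.mpr (Finset.mem_union_left _ haL))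
            (Finset.mem_coe.mpr (Finset.mem_union_left _ hxL)) ha
          have hby : b = y := hf (Finset.mem_coe.mpr (Finset.mem_union_right _ hbR))
            (Finset.mem_coe.mpr (Finset.mem_union_right _ hyR)) hb
          rwa [hax, hby] at hab
        · intro x hx
          exact Finset.mem_filter.mpr ⟨hXL hx, hs1 (Finset.mem_image_of_mem f hx)⟩
        · intro y hy
          exact Finset.mem_filter.mpr ⟨hYR hy, hs2 (Finset.mem_image_of_mem f hy)⟩
      have hPX : L.filter (fun x => f x ∈ X') = X := congrArg Prod.fst hP
      have hPY : R.filter (fun y => f y ∈ Y') = Y := congrArg Prod.snd hP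
      have hX' : X' = X.image f := by
        apply Finset.Subset.antisymm _ hs1
        intro a ha
        obtain ⟨x, hxL, rfl⟩ := Finset.mem_image.mp (hX'L ha)
        have : x ∈ X := by rw [← hPX]; exact Finset.mem_filter.mpr ⟨hxL, ha⟩
        exact Finset.mem_image_of_mem f this
      have hY' : Y' = Y.image f := by
        apply Finset.Subset.antisymm _ hs2
        intro b hb
        obtain ⟨y, hyR, rfl⟩ := Finset.mem_image.mp (hY'R hb)
        have : y ∈ Y := by rw [← hPY]; exact Finset.mem_filter.mpr ⟨hyR, hb⟩
        exact Finset.mem_image_of_mem f this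
      exact Prod.ext hX' hY'
  · rintro ⟨X, Y⟩ hB ⟨X', Y'⟩ hB' heq
    simp only [Prod.mk.injEq] at heq
    have h1 := image_cancel hf (hB.1.1.trans Finset.subset_union_left)
      (hB'.1.1.trans Finset.subset_union_left) heq.1
    have h2 := image_cancel hf (hB.1.2.1.trans Finset.subset_union_right)
      (hB'.1.2.1.trans Finset.subset_union_right) heq.2
    exact Prod.ext h1 h2

/-- For a bipartite graph `G` on `n ≥ 2` vertices and any edge `(u, v) ∈ E`, the number of
maximal bicliques of `G` containing both `u` and `v` is at most `g(n-2)`. -/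
theorem stmt7 {V : Type*} (L R : Finset V) (E : Finset (V × V))
    (hdisj : Disjoint L R) (hE : E ⊆ L ×ˢ R) (hn : 2 ≤ L.card + R.card)
    (u v : V) (huv : (u, v) ∈ E) :
    {B ∈ BC L R E | u ∈ B.1 ∧ v ∈ B.2}.ncard ≤ g (L.card + R.card - 2) := by
  classical
  obtain ⟨hu, hv⟩ := Finset.mem_product.mp (hE huv)
  set L' := L.erase u with hL'def
  set R' := R.erase v with hR'def
  set PX := L'.filter (fun x => (x, v) ∉ E) with hPXdef
  set PY := R'.filter (fun y => (u, y) ∉ E) with hPYdef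
  set E' := (L' ×ˢ R').filter (fun p => ((p.1, v) ∈ E ∧ (u, p.2) ∈ E) → p ∈ E) with hE'def
  have hE'sub : E' ⊆ L' ×ˢ R' := Finset.filter_subset _ _
  have hdisj' : Disjoint L' R' :=
    Disjoint.mono (Finset.erase_subset _ _) (Finset.erase_subset _ _) hdisj
  -- Step 1: injection into BC L' R' E'
  have step1 : {B ∈ BC L R E | u ∈ B.1 ∧ v ∈ B.2}.ncard ≤ (BC L' R' E').ncard := by
    apply Set.ncard_le_ncard_of_injOn
      (fun B => (B.1.erase u ∪ PX, B.2.erase v ∪ PY)) ?_ ?_ (bc_finite _ _ _)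
    · rintro ⟨X, Y⟩ ⟨hBC, hXu, hYv⟩
      obtain ⟨⟨hXL, hYR, hedge⟩, hmax⟩ := hBC
      have hXv : ∀ x ∈ X, (x, v) ∈ E := fun x hx => hedge x hx v hYv
      have hYu : ∀ y ∈ Y, (u, y) ∈ E := fun y hy => hedge u hXu y hy
      refine ⟨⟨?_, ?_, ?_⟩, ?_⟩
      · exact Finset.union_subset (Finset.erase_subset_erase u hXL) (Finset.filter_subset _ _)
      · exact Finset.union_subset (Finset.erase_subset_erase v hYR) (Finset.filter_subset _ _)
      · intro x hx y hy
        have hxL' : x ∈ L' := by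
          rcases Finset.mem_union.mp hx with h | h
          · exact Finset.erase_subset_erase u hXL h
          · exact Finset.filter_subset _ _ h
        have hyR' : y ∈ R' := by
          rcases Finset.mem_union.mp hy with h | h
          · exact Finset.erase_subset_erase v hYR h
          · exact Finset.filter_subset _ _ h
        rw [hE'def]
        refine Finset.mem_filter.mpr ⟨Finset.mem_product.mpr ⟨hxL', hyR'⟩, ?_⟩
        rintro ⟨hxv, huy⟩
        have hxX : x ∈ X.erase u := by
          rcases Finset.mem_union.mp hx with h | h
          · exact h
          · exact absurd hxv (Finset.mem_filter.mp h).2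
        have hyY : y ∈ Y.erase v := by
          rcases Finset.mem_union.mp hy with h | h
          · exact h
          · exact absurd huy (Finset.mem_filter.mp h).2
        exact hedge x (Finset.mem_of_mem_erase hxX) y (Finset.mem_of_mem_erase hyY)
      · rintro ⟨X'', Y''⟩ ⟨hX''L, hY''R, hedge''⟩ hsub1 hsub2
        have hQ : (insert u (X''.filter fun x => (x, v) ∈ E),
            insert v (Y''.filter fun y => (u, y) ∈ E)) = (X, Y) := by
          apply hmax
          · refine ⟨?_, ?_, ?_⟩
            · exact Finset.insert_subset hu
                ((Finset.filter_subset _ _).trans (hX''L.trans (Finset.erase_subset _ _)))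
            · exact Finset.insert_subset hv
                ((Finset.filter_subset _ _).trans (hY''R.trans (Finset.erase_subset _ _)))
            · intro x hx y hy
              rcases Finset.mem_insert.mp hx with rfl | hx'
              · rcases Finset.mem_insert.mp hy with rfl | hy'
                · exact huv
                · exact (Finset.mem_filter.mp hy').2
              · have hxv := (Finset.mem_filter.mp hx').2
                rcases Finset.mem_insert.mp hy with rfl | hy'
                · exact hxv
                · have huy := (Finset.mem_filter.mp hy').2
                  have hmem := hedge'' x (Finset.mem_filter.mp hx').1 y
                    (Finset.mem_filter.mp hy').1
                  rw [hE'def] at hmem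
                  exact (Finset.mem_filter.mp hmem).2 ⟨hxv, huy⟩
          · intro x hx
            by_cases hxu : x = u
            · subst hxu; exact Finset.mem_insert_self _ _
            · refine Finset.mem_insert_of_mem (Finset.mem_filter.mpr ⟨?_, hXv x hx⟩)
              exact hsub1 (Finset.mem_union_left _ (Finset.mem_erase.mpr ⟨hxu, hx⟩))
          · intro y hy
            by_cases hyv : y = v
            · subst hyv; exact Finset.mem_insert_self _ _
            · refine Finset.mem_insert_of_mem (Finset.mem_filter.mpr ⟨?_, hYu y hy⟩)
              exact hsub2 (Finset.mem_union_left _ (Finset.mem_erase.mpr ⟨hyv, hy⟩))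
        have hQ1 : insert u (X''.filter fun x => (x, v) ∈ E) = X := congrArg Prod.fst hQ
        have hQ2 : insert v (Y''.filter fun y => (u, y) ∈ E) = Y := congrArg Prod.snd hQ
        have hX'' : X'' = X.erase u ∪ PX := by
          apply Finset.Subset.antisymm _ hsub1
          intro x hx
          have hxL' := hX''L hx
          have hxu : x ≠ u := (Finset.mem_erase.mp hxL').1
          by_cases hxv : (x, v) ∈ E
          · have : x ∈ X := by
              rw [← hQ1]; exact Finset.mem_insert_of_mem (Finset.mem_filter.mpr ⟨hx, hxv⟩)
            exact Finset.mem_union_left _ (Finset.mem_erase.mpr ⟨hxu, this⟩)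
          · exact Finset.mem_union_right _ (Finset.mem_filter.mpr ⟨hxL', hxv⟩)
        have hY'' : Y'' = Y.erase v ∪ PY := by
          apply Finset.Subset.antisymm _ hsub2
          intro y hy
          have hyR' := hY''R hy
          have hyv : y ≠ v := (Finset.mem_erase.mp hyR').1
          by_cases huy : (u, y) ∈ E
          · have : y ∈ Y := by
              rw [← hQ2]; exact Finset.mem_insert_of_mem (Finset.mem_filter.mpr ⟨hy, huy⟩)
            exact Finset.mem_union_left _ (Finset.mem_erase.mpr ⟨hyv, this⟩)
          · exact Finset.mem_union_right _ (Finset.mem_filter.mpr ⟨hyR', huy⟩)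
        exact Prod.ext hX'' hY''
    · -- injectivity
      have recover1 : ∀ X : Finset V, u ∈ X → (∀ x ∈ X, (x, v) ∈ E) →
          insert u ((X.erase u ∪ PX).filter fun x => (x, v) ∈ E) = X := by
        intro X hXu hXv
        have h1 : (X.erase u).filter (fun x => (x, v) ∈ E) = X.erase u :=
          Finset.filter_true_of_mem (fun x hx => hXv x (Finset.mem_of_mem_erase hx))
        have h2 : PX.filter (fun x => (x, v) ∈ E) = ∅ := by
          apply Finset.filter_false_of_mem
          intro x hx
          exact (Finset.mem_filter.mp hx).2
        rw [Finset.filter_union, h1, h2, Finset.union_empty, Finset.insert_erase hXu]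
      have recover2 : ∀ Y : Finset V, v ∈ Y → (∀ y ∈ Y, (u, y) ∈ E) →
          insert v ((Y.erase v ∪ PY).filter fun y => (u, y) ∈ E) = Y := by
        intro Y hYv hYu
        have h1 : (Y.erase v).filter (fun y => (u, y) ∈ E) = Y.erase v :=
          Finset.filter_true_of_mem (fun y hy => hYu y (Finset.mem_of_mem_erase hy))
        have h2 : PY.filter (fun y => (u, y) ∈ E) = ∅ := by
          apply Finset.filter_false_of_mem
          intro y hy
          exact (Finset.mem_filter.mp hy).2
        rw [Finset.filter_union, h1, h2, Finset.union_empty, Finset.insert_erase hYv]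
      rintro ⟨X, Y⟩ ⟨hB, hXu, hYv⟩ ⟨X', Y'⟩ ⟨hB', hXu', hYv'⟩ heq
      simp only [Prod.mk.injEq] at heq
      have hXv : ∀ x ∈ X, (x, v) ∈ E := fun x hx => hB.1.2.2 x hx v hYv
      have hYu : ∀ y ∈ Y, (u, y) ∈ E := fun y hy => hB.1.2.2 u hXu y hy
      have hXv' : ∀ x ∈ X', (x, v) ∈ E := fun x hx => hB'.1.2.2 x hx v hYv'
      have hYu' : ∀ y ∈ Y', (u, y) ∈ E := fun y hy => hB'.1.2.2 u hXu' y hy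
      have e1 : X = X' := by
        rw [← recover1 X hXu hXv, ← recover1 X' hXu' hXv', heq.1]
      have e2 : Y = Y' := by
        rw [← recover2 Y hYv hYu, ← recover2 Y' hYv' hYu', heq.2]
      exact Prod.ext e1 e2
  -- Step 2: relabel onto ℕ
  set s : Finset V := L' ∪ R' with hsdef
  set f : V → ℕ := fun x => if h : x ∈ s then ((s.equivFin ⟨x, h⟩ : Fin s.card) : ℕ) else 0
    with hfdef
  have hf : Set.InjOn f ↑s := by
    intro a ha b hb hab
    have ha' : a ∈ s := ha
    have hb' : b ∈ s := hb
    rw [hfdef] at hab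
    simp only [dif_pos ha', dif_pos hb'] at hab
    have := s.equivFin.injective (Fin.val_injective hab)
    exact congrArg Subtype.val this
  have step2 := bc_relabel L' R' E' hE'sub f hf
  -- cardinalities
  have hLpos : 1 ≤ L.card := Finset.card_pos.mpr ⟨u, hu⟩
  have hRpos : 1 ≤ R.card := Finset.card_pos.mpr ⟨v, hv⟩
  have hcardL' : L'.card = L.card - 1 := Finset.card_erase_of_mem hu
  have hcardR' : R'.card = R.card - 1 := Finset.card_erase_of_mem hv
  have hcardLi : (L'.image f).card = L'.card :=
    Finset.card_image_of_injOn (hf.mono (by rw [hsdef]; exact_mod_cast Finset.subset_union_left))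
  have hcardRi : (R'.image f).card = R'.card :=
    Finset.card_image_of_injOn (hf.mono (by rw [hsdef]; exact_mod_cast Finset.subset_union_right))
  have hdisjI : Disjoint (L'.image f) (R'.image f) := by
    rw [Finset.disjoint_left]
    intro a haL haR
    obtain ⟨x, hx, rfl⟩ := Finset.mem_image.mp haL
    obtain ⟨y, hy, hxy⟩ := Finset.mem_image.mp haR
    have hyx : y = x := hf (Finset.mem_coe.mpr (Finset.mem_union_right _ hy))
      (Finset.mem_coe.mpr (Finset.mem_union_left _ hx)) hxy
    subst hyx
    exact Finset.disjoint_left.mp hdisj' hx hy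
  have hEI : E'.image (Prod.map f f) ⊆ (L'.image f) ×ˢ (R'.image f) := by
    rintro ⟨a, b⟩ hab
    obtain ⟨⟨x, y⟩, hxy, habe⟩ := Finset.mem_image.mp hab
    obtain ⟨hxL, hyR⟩ := Finset.mem_product.mp (hE'sub hxy)
    have ha : f x = a := congrArg Prod.fst habe
    have hb : f y = b := congrArg Prod.snd habe
    exact Finset.mem_product.mpr ⟨ha ▸ Finset.mem_image_of_mem f hxL,
      hb ▸ Finset.mem_image_of_mem f hyR⟩
  have step3 := g_ge hdisjI hEI
  have hc : (L'.image f).card + (R'.image f).card = L.card + R.card - 2 := by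
    rw [hcardLi, hcardRi, hcardL', hcardR']
    omega
  calc {B ∈ BC L R E | u ∈ B.1 ∧ v ∈ B.2}.ncard
      ≤ (BC L' R' E').ncard := step1
    _ ≤ (BC (L'.image f) (R'.image f) (E'.image (Prod.map f f))).ncard := step2
    _ ≤ g ((L'.image f).card + (R'.image f).card) := step3
    _ = g (L.card + R.card - 2) := by rw [hc]
end

section
/- For any bipartite graph G = (L, R, E) with n ≥ 2 vertices and any edge e = (u, v) ∉ E, the number of maximal bicliques of G subsumed by adding e satisfies |BC(G) \ BC(G+e)| ≤ 2·g(n−2). -/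
section Aux

variable {V : Type*}

lemma BC_subset_powerset (L R : Finset V) (E : Finset (V × V)) :
    BC L R E ⊆ ↑(L.powerset ×ˢ R.powerset) := by
  intro B hB
  simp only [Finset.mem_coe, Finset.mem_product, Finset.mem_powerset]
  exact ⟨hB.1.1, hB.1.2.1⟩

lemma BC_finite (L R : Finset V) (E : Finset (V × V)) : (BC L R E).Finite :=
  Set.Finite.subset (Finset.finite_toSet _) (BC_subset_powerset L R E)

lemma BC_ncard_le (L R : Finset V) (E : Finset (V × V)) :
    (BC L R E).ncard ≤ 2 ^ (L.card + R.card) := by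
  calc (BC L R E).ncard ≤ (↑(L.powerset ×ˢ R.powerset) : Set (Finset V × Finset V)).ncard :=
        Set.ncard_le_ncard (BC_subset_powerset L R E) (Finset.finite_toSet _)
    _ = (L.powerset ×ˢ R.powerset).card := Set.ncard_coe_finset _
    _ = 2 ^ L.card * 2 ^ R.card := by
        rw [Finset.card_product, Finset.card_powerset, Finset.card_powerset]
    _ = 2 ^ (L.card + R.card) := (pow_add 2 _ _).symm

lemma bddAbove_gset (m : ℕ) :
    BddAbove {k : ℕ | ∃ (W : Type) (L R : Finset W) (E : Finset (W × W)),
      Disjoint L R ∧ E ⊆ L ×ˢ R ∧ L.card + R.card = m ∧ (BC L R E).ncard = k} := by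
  refine ⟨2 ^ m, ?_⟩
  rintro k ⟨W, L, R, E, _, _, hm, rfl⟩
  simpa [hm] using BC_ncard_le L R E

lemma le_g {W : Type} (L R : Finset W) (E : Finset (W × W))
    (hd : Disjoint L R) (hE : E ⊆ L ×ˢ R) {m : ℕ} (hm : L.card + R.card = m) :
    (BC L R E).ncard ≤ g m :=
  le_csSup (bddAbove_gset m) ⟨W, L, R, E, hd, hE, hm, rfl⟩

lemma image_eq_of_image_eq [DecidableEq V] {W : Type*} [DecidableEq W] {f : V → W}
    {L s t : Finset V} (hf : Set.InjOn f ↑L) (hs : s ⊆ L) (ht : t ⊆ L)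
    (h : s.image f = t.image f) : s = t := by
  ext a
  constructor
  · intro ha
    obtain ⟨b, hb, hba⟩ := Finset.mem_image.mp (h ▸ Finset.mem_image_of_mem f ha)
    rwa [hf (ht hb) (hs ha) hba] at hb
  · intro ha
    obtain ⟨b, hb, hba⟩ := Finset.mem_image.mp (h ▸ Finset.mem_image_of_mem f ha)
    rwa [hf (hs hb) (ht ha) hba] at hb

lemma BC_image [DecidableEq V] {W : Type*} [DecidableEq W] (f : V → W)
    (L R : Finset V) (E : Finset (V × V)) (hE : E ⊆ L ×ˢ R)
    (hf : Set.InjOn f ↑(L ∪ R)) :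
    BC (L.image f) (R.image f) (E.image (Prod.map f f)) =
      (fun B : Finset V × Finset V => (B.1.image f, B.2.image f)) '' BC L R E := by
  have hfL : Set.InjOn f ↑L := hf.mono (by exact_mod_cast Finset.subset_union_left)
  have hfR : Set.InjOn f ↑R := hf.mono (by exact_mod_cast Finset.subset_union_right)
  have key : ∀ x ∈ L, ∀ y ∈ R,
      ((f x, f y) ∈ E.image (Prod.map f f) ↔ (x, y) ∈ E) := by
    intro x hx y hy
    constructor
    · intro h
      obtain ⟨p, hp, hpe⟩ := Finset.mem_image.mp h
      have hpL := Finset.mem_product.mp (hE hp)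
      have h1 : f p.1 = f x := congrArg Prod.fst hpe
      have h2 : f p.2 = f y := congrArg Prod.snd hpe
      have e1 : p.1 = x := hfL hpL.1 hx h1
      have e2 : p.2 = y := hfR hpL.2 hy h2
      rwa [← e1, ← e2, Prod.mk.eta]
    · intro h
      exact Finset.mem_image.mpr ⟨(x, y), h, rfl⟩
  ext B'
  constructor
  · rintro ⟨⟨hB1, hB2, hadj⟩, hmax⟩
    set A1 := L.filter (fun x => f x ∈ B'.1) with hA1
    set A2 := R.filter (fun y => f y ∈ B'.2) with hA2
    have hA1img : A1.image f = B'.1 := by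
      apply Finset.Subset.antisymm
      · intro w hw
        obtain ⟨x, hx, rfl⟩ := Finset.mem_image.mp hw
        exact (Finset.mem_filter.mp hx).2
      · intro w hw
        obtain ⟨x, hx, rfl⟩ := Finset.mem_image.mp (hB1 hw)
        exact Finset.mem_image_of_mem f (Finset.mem_filter.mpr ⟨hx, hw⟩)
    have hA2img : A2.image f = B'.2 := by
      apply Finset.Subset.antisymm
      · intro w hw
        obtain ⟨y, hy, rfl⟩ := Finset.mem_image.mp hw
        exact (Finset.mem_filter.mp hy).2
      · intro w hw
        obtain ⟨y, hy, rfl⟩ := Finset.mem_image.mp (hB2 hw)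
        exact Finset.mem_image_of_mem f (Finset.mem_filter.mpr ⟨hy, hw⟩)
    have hbc : IsBiclique L R E (A1, A2) := by
      refine ⟨Finset.filter_subset _ _, Finset.filter_subset _ _, ?_⟩
      intro x hx y hy
      obtain ⟨hxL, hxB⟩ := Finset.mem_filter.mp hx
      obtain ⟨hyR, hyB⟩ := Finset.mem_filter.mp hy
      exact (key x hxL y hyR).mp (hadj _ hxB _ hyB)
    have hA_max : IsMaximalBiclique L R E (A1, A2) := by
      refine ⟨hbc, ?_⟩
      rintro ⟨D1, D2⟩ ⟨hD1, hD2, hDadj⟩ h1 h2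
      have hbig : IsBiclique (L.image f) (R.image f) (E.image (Prod.map f f))
          (D1.image f, D2.image f) := by
        refine ⟨Finset.image_subset_image hD1, Finset.image_subset_image hD2, ?_⟩
        intro w hw z hz
        obtain ⟨x, hx, rfl⟩ := Finset.mem_image.mp hw
        obtain ⟨y, hy, rfl⟩ := Finset.mem_image.mp hz
        exact (key x (hD1 hx) y (hD2 hy)).mpr (hDadj x hx y hy)
      have heq := hmax (D1.image f, D2.image f) hbig
        (by rw [← hA1img]; exact Finset.image_subset_image h1)
        (by rw [← hA2img]; exact Finset.image_subset_image h2)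
      have e1 : D1.image f = B'.1 := congrArg Prod.fst heq
      have e2 : D2.image f = B'.2 := congrArg Prod.snd heq
      have : D1 ⊆ A1 := by
        intro d hd
        refine Finset.mem_filter.mpr ⟨hD1 hd, ?_⟩
        rw [← e1]; exact Finset.mem_image_of_mem f hd
      have h2' : D2 ⊆ A2 := by
        intro d hd
        refine Finset.mem_filter.mpr ⟨hD2 hd, ?_⟩
        rw [← e2]; exact Finset.mem_image_of_mem f hd
      exact Prod.ext (Finset.Subset.antisymm this h1) (Finset.Subset.antisymm h2' h2)
    exact ⟨(A1, A2), hA_max, by simp [hA1img, hA2img]⟩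
  · rintro ⟨⟨X, Y⟩, ⟨⟨hXL, hYR, hadj⟩, hmax⟩, rfl⟩
    refine ⟨⟨Finset.image_subset_image hXL, Finset.image_subset_image hYR, ?_⟩, ?_⟩
    · intro w hw z hz
      obtain ⟨x, hx, rfl⟩ := Finset.mem_image.mp hw
      obtain ⟨y, hy, rfl⟩ := Finset.mem_image.mp hz
      exact (key x (hXL hx) y (hYR hy)).mpr (hadj x hx y hy)
    · rintro ⟨C1, C2⟩ ⟨hC1, hC2, hCadj⟩ h1 h2
      set A1 := L.filter (fun x => f x ∈ C1) with hA1
      set A2 := R.filter (fun y => f y ∈ C2) with hA2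
      have hA1img : A1.image f = C1 := by
        apply Finset.Subset.antisymm
        · intro w hw
          obtain ⟨x, hx, rfl⟩ := Finset.mem_image.mp hw
          exact (Finset.mem_filter.mp hx).2
        · intro w hw
          obtain ⟨x, hx, rfl⟩ := Finset.mem_image.mp (hC1 hw)
          exact Finset.mem_image_of_mem f (Finset.mem_filter.mpr ⟨hx, hw⟩)
      have hA2img : A2.image f = C2 := by
        apply Finset.Subset.antisymm
        · intro w hw
          obtain ⟨y, hy, rfl⟩ := Finset.mem_image.mp hw
          exact (Finset.mem_filter.mp hy).2
        · intro w hw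
          obtain ⟨y, hy, rfl⟩ := Finset.mem_image.mp (hC2 hw)
          exact Finset.mem_image_of_mem f (Finset.mem_filter.mpr ⟨hy, hw⟩)
      have hbc : IsBiclique L R E (A1, A2) := by
        refine ⟨Finset.filter_subset _ _, Finset.filter_subset _ _, ?_⟩
        intro x hx y hy
        obtain ⟨hxL, hxB⟩ := Finset.mem_filter.mp hx
        obtain ⟨hyR, hyB⟩ := Finset.mem_filter.mp hy
        exact (key x hxL y hyR).mp (hCadj _ hxB _ hyB)
      have hXA : X ⊆ A1 := fun x hx =>
        Finset.mem_filter.mpr ⟨hXL hx, h1 (Finset.mem_image_of_mem f hx)⟩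
      have hYA : Y ⊆ A2 := fun y hy =>
        Finset.mem_filter.mpr ⟨hYR hy, h2 (Finset.mem_image_of_mem f hy)⟩
      have heq := hmax (A1, A2) hbc hXA hYA
      have e1 : A1 = X := congrArg Prod.fst heq
      have e2 : A2 = Y := congrArg Prod.snd heq
      exact Prod.ext (by rw [← hA1img, e1]) (by rw [← hA2img, e2])

/-- The number of maximal bicliques of any bipartite graph with `m` vertices (over any
vertex type) is at most `g m`. -/
lemma BC_ncard_le_g [DecidableEq V] (L R : Finset V) (E : Finset (V × V))
    (hd : Disjoint L R) (hE : E ⊆ L ×ˢ R) :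
    (BC L R E).ncard ≤ g (L.card + R.card) := by
  classical
  set s := L ∪ R with hs
  let f : V → ℕ := fun x => if h : x ∈ s then (s.equivFin ⟨x, h⟩ : Fin s.card).val else 0
  have hf : Set.InjOn f ↑s := by
    intro a ha b hb hab
    simp only [Finset.mem_coe] at ha hb
    simp only [f, dif_pos ha, dif_pos hb] at hab
    have := s.equivFin.injective (Fin.val_injective hab)
    exact congrArg Subtype.val this
  have hfL : Set.InjOn f ↑L := hf.mono (by exact_mod_cast Finset.subset_union_left)
  have hfR : Set.InjOn f ↑R := hf.mono (by exact_mod_cast Finset.subset_union_right)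
  have hinj : Set.InjOn (fun B : Finset V × Finset V => (B.1.image f, B.2.image f))
      (BC L R E) := by
    rintro ⟨X, Y⟩ hB ⟨X', Y'⟩ hB' heq
    have e1 := congrArg Prod.fst heq
    have e2 := congrArg Prod.snd heq
    simp only at e1 e2
    exact Prod.ext (image_eq_of_image_eq hfL hB.1.1 hB'.1.1 e1)
      (image_eq_of_image_eq hfR hB.1.2.1 hB'.1.2.1 e2)
  have hcard : (BC L R E).ncard
      = (BC (L.image f) (R.image f) (E.image (Prod.map f f))).ncard := by
    rw [BC_image f L R E hE hf, Set.ncard_image_of_injOn hinj]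
  rw [hcard]
  have hdisj' : Disjoint (L.image f) (R.image f) := by
    rw [Finset.disjoint_left]
    rintro w hwL hwR
    obtain ⟨a, ha, rfl⟩ := Finset.mem_image.mp hwL
    obtain ⟨b, hb, hba⟩ := Finset.mem_image.mp hwR
    have : b = a := hf (Finset.mem_coe.mpr (Finset.mem_union_right _ hb))
      (Finset.mem_coe.mpr (Finset.mem_union_left _ ha)) hba
    exact Finset.disjoint_left.mp hd ha (this ▸ hb)
  have hE' : E.image (Prod.map f f) ⊆ (L.image f) ×ˢ (R.image f) := by
    intro p hp
    obtain ⟨q, hq, rfl⟩ := Finset.mem_image.mp hp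
    have hqm := Finset.mem_product.mp (hE hq)
    exact Finset.mem_product.mpr
      ⟨Finset.mem_image_of_mem f hqm.1, Finset.mem_image_of_mem f hqm.2⟩
  exact le_g _ _ _ hdisj' hE'
    (by rw [Finset.card_image_of_injOn hfL, Finset.card_image_of_injOn hfR])

lemma max_swap [DecidableEq V] {L R : Finset V} {E : Finset (V × V)}
    {B : Finset V × Finset V} (h : IsMaximalBiclique L R E B) :
    IsMaximalBiclique R L (E.image Prod.swap) (B.2, B.1) := by
  obtain ⟨⟨h1, h2, h3⟩, hmax⟩ := h
  refine ⟨⟨h2, h1, fun y hy x hx => Finset.mem_image.mpr ⟨(x, y), h3 x hx y hy, rfl⟩⟩, ?_⟩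
  rintro ⟨Y', X'⟩ ⟨hY', hX', hadj'⟩ hBY hBX
  have hb : IsBiclique L R E (X', Y') := by
    refine ⟨hX', hY', fun x hx y hy => ?_⟩
    obtain ⟨p, hp, hps⟩ := Finset.mem_image.mp (hadj' y hy x hx)
    have hpxy : p = (x, y) := by
      have := congrArg Prod.swap hps
      rwa [Prod.swap_swap] at this
    rwa [hpxy] at hp
  have heq := hmax (X', Y') hb hBX hBY
  rw [← heq]

/-- The key counting lemma: maximal bicliques containing `u` on the left inject into the
maximal bicliques of a graph on `n - 2` vertices. -/
lemma main_u [DecidableEq V] (L R : Finset V) (E : Finset (V × V))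
    (hdisj : Disjoint L R) (hE : E ⊆ L ×ˢ R) (u v : V) (hu : u ∈ L) (hv : v ∈ R)
    (he : (u, v) ∉ E) :
    {B : Finset V × Finset V | IsMaximalBiclique L R E B ∧ u ∈ B.1}.ncard ≤
      g (L.card + R.card - 2) := by
  classical
  set Lu := L.erase u with hLu
  set Rv := R.erase v with hRv
  set Eu := E.filter (fun p => p.1 ≠ u ∧ (u, p.2) ∈ E) with hEuDef
  set Nu := R.filter (fun y => (u, y) ∈ E) with hNuDef
  set Z := Lu.filter (fun x => ∀ y ∈ Rv, (x, y) ∈ Eu) with hZDef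
  have hEu_sub : Eu ⊆ Lu ×ˢ Rv := by
    intro p hp
    obtain ⟨hpE, hp1, hp2⟩ := Finset.mem_filter.mp hp
    have hpm := Finset.mem_product.mp (hE hpE)
    refine Finset.mem_product.mpr ⟨Finset.mem_erase.mpr ⟨hp1, hpm.1⟩,
      Finset.mem_erase.mpr ⟨?_, hpm.2⟩⟩
    rintro rfl
    exact he hp2
  have hEu_E : Eu ⊆ E := Finset.filter_subset _ _
  have hdisj' : Disjoint Lu Rv :=
    Finset.disjoint_of_subset_left (Finset.erase_subset _ _)
      (Finset.disjoint_of_subset_right (Finset.erase_subset _ _) hdisj)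
  have hcard : Lu.card + Rv.card = L.card + R.card - 2 := by
    rw [Finset.card_erase_of_mem hu, Finset.card_erase_of_mem hv]
    have h1 : 1 ≤ L.card := Finset.one_le_card.mpr ⟨u, hu⟩
    have h2 : 1 ≤ R.card := Finset.one_le_card.mpr ⟨v, hv⟩
    omega
  -- the "top" maximal biclique (Z, Rv) of the auxiliary graph
  have hZmax : IsMaximalBiclique Lu Rv Eu (Z, Rv) := by
    refine ⟨⟨Finset.filter_subset _ _, Finset.Subset.refl _, ?_⟩, ?_⟩
    · intro x hx y hy
      exact (Finset.mem_filter.mp hx).2 y hy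
    · rintro ⟨X', Y'⟩ ⟨hX', hY', hadj'⟩ h1 h2
      have hY'eq : Y' = Rv := Finset.Subset.antisymm hY' h2
      have hX'Z : X' ⊆ Z := by
        intro x hx
        refine Finset.mem_filter.mpr ⟨hX' hx, fun y hy => ?_⟩
        exact hadj' x hx y (hY'eq ▸ hy)
      exact Prod.ext (Finset.Subset.antisymm hX'Z h1) hY'eq
  -- key fact: a maximal biclique with left side {u} has right side Nu
  have hNuR : Nu ⊆ R := Finset.filter_subset _ _
  have hNuRv : Nu ⊆ Rv := by
    intro y hy
    obtain ⟨hyR, hyE⟩ := Finset.mem_filter.mp hy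
    refine Finset.mem_erase.mpr ⟨?_, hyR⟩
    rintro rfl
    exact he hyE
  have hsingleton : ∀ Y : Finset V, IsMaximalBiclique L R E ({u}, Y) → Y = Nu := by
    intro Y hm
    have hYNu : Y ⊆ Nu := by
      intro y hy
      exact Finset.mem_filter.mpr ⟨hm.1.2.1 hy,
        hm.1.2.2 u (Finset.mem_singleton_self u) y hy⟩
    have hbc : IsBiclique L R E ({u}, Nu) := by
      refine ⟨Finset.singleton_subset_iff.mpr hu, hNuR, ?_⟩
      intro x hx y hy
      rw [Finset.mem_singleton.mp hx]
      exact (Finset.mem_filter.mp hy).2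
    have := hm.2 ({u}, Nu) hbc (Finset.Subset.refl _) hYNu
    exact (congrArg Prod.snd this).symm
  -- the injection
  set ψ : Finset V × Finset V → Finset V × Finset V :=
    fun B => if B.1 = {u} then (Z, Rv) else (B.1.erase u, B.2) with hψ
  have hmem : ∀ B ∈ {B : Finset V × Finset V | IsMaximalBiclique L R E B ∧ u ∈ B.1},
      ψ B ∈ BC Lu Rv Eu := by
    rintro ⟨X, Y⟩ ⟨hmax, huX⟩
    obtain ⟨⟨hXL, hYR, hadj⟩, hmaxp⟩ := hmax
    have hYN : ∀ y ∈ Y, (u, y) ∈ E := fun y hy => hadj u huX y hy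
    have hvY : v ∉ Y := fun h => he (hYN v h)
    by_cases hX1 : X = {u}
    · rw [show ψ (X, Y) = (Z, Rv) from if_pos hX1]; exact hZmax
    · simp only [ψ, if_neg hX1]
      refine ⟨⟨Finset.erase_subset_erase u hXL, Finset.subset_erase.mpr ⟨hYR, hvY⟩, ?_⟩, ?_⟩
      · intro x hx y hy
        obtain ⟨hxu, hxX⟩ := Finset.mem_erase.mp hx
        exact Finset.mem_filter.mpr ⟨hadj x hxX y hy, hxu, hYN y hy⟩
      · rintro ⟨X', Y'⟩ ⟨hX'L, hY'R, hadj'⟩ h1 h2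
        have hne : (X.erase u).Nonempty := by
          rw [Finset.nonempty_iff_ne_empty]
          intro hemp
          rcases (Finset.erase_eq_empty_iff X u).mp hemp with h | h
          · exact (Finset.notMem_empty u) (h ▸ huX)
          · exact hX1 h
        obtain ⟨x₀, hx₀⟩ := hne
        have hx₀' : x₀ ∈ X' := h1 hx₀
        have hY'N : ∀ y ∈ Y', (u, y) ∈ E := fun y hy =>
          (Finset.mem_filter.mp (hadj' x₀ hx₀' y hy)).2.2
        have huX' : u ∉ X' := fun h => (Finset.mem_erase.mp (hX'L h)).1 rfl
        have hbig : IsBiclique L R E (insert u X', Y') := by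
          refine ⟨Finset.insert_subset hu ((hX'L).trans (Finset.erase_subset _ _)),
            hY'R.trans (Finset.erase_subset _ _), ?_⟩
          intro x hx y hy
          rcases Finset.mem_insert.mp hx with rfl | hx'
          · exact hY'N y hy
          · exact hEu_E (hadj' x hx' y hy)
        have hXsub : X ⊆ insert u X' := by
          intro x hx
          by_cases hxu : x = u
          · exact hxu ▸ Finset.mem_insert_self u X'
          · exact Finset.mem_insert_of_mem (h1 (Finset.mem_erase.mpr ⟨hxu, hx⟩))
        have heq := hmaxp (insert u X', Y') hbig hXsub h2
        have e1 : insert u X' = X := congrArg Prod.fst heq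
        have e2 : Y' = Y := congrArg Prod.snd heq
        refine Prod.ext ?_ e2
        rw [← e1, Finset.erase_insert huX']
  have hinj : Set.InjOn ψ
      {B : Finset V × Finset V | IsMaximalBiclique L R E B ∧ u ∈ B.1} := by
    have mixed : ∀ A B C D : Finset V,
        IsMaximalBiclique L R E (A, B) → IsMaximalBiclique L R E (C, D) → u ∈ C →
        A = {u} → C ≠ {u} → (Z, Rv) = (C.erase u, D) → False := by
      intro A B C D hm1 hm2 huC hA1 hC1 heq
      have hD : D = Rv := (congrArg Prod.snd heq).symm
      have hDNu : D ⊆ Nu := by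
        intro y hy
        exact Finset.mem_filter.mpr ⟨hm2.1.2.1 hy, hm2.1.2.2 u huC y hy⟩
      have hNuRv' : Nu = Rv := Finset.Subset.antisymm hNuRv (hD ▸ hDNu)
      have hB : B = Nu := hsingleton B (hA1 ▸ hm1)
      have hbig := hm1.2 (C, D) hm2.1
        (by rw [hA1]; exact Finset.singleton_subset_iff.mpr huC)
        (by rw [hB, hNuRv', ← hD])
      have : C = A := congrArg Prod.fst hbig
      exact hC1 (this.trans hA1)
    rintro ⟨X, Y⟩ ⟨hm1, hu1⟩ ⟨X', Y'⟩ ⟨hm2, hu2⟩ heq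
    by_cases h1 : X = {u} <;> by_cases h2 : X' = {u}
    · have e1 : Y = Nu := hsingleton Y (h1 ▸ hm1)
      have e2 : Y' = Nu := hsingleton Y' (h2 ▸ hm2)
      rw [h1, h2, e1, e2]
    · exact (mixed X Y X' Y' hm1 hm2 hu2 h1 h2 (by simpa [ψ, h1, h2] using heq)).elim
    · exact (mixed X' Y' X Y hm2 hm1 hu1 h2 h1
        (by simpa [ψ, h1, h2] using heq.symm)).elim
    · simp only [ψ, if_neg h1, if_neg h2, Prod.mk.injEq] at heq
      refine Prod.ext ?_ heq.2
      rw [← Finset.insert_erase hu1, ← Finset.insert_erase hu2, heq.1]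
  calc {B : Finset V × Finset V | IsMaximalBiclique L R E B ∧ u ∈ B.1}.ncard
      ≤ (BC Lu Rv Eu).ncard :=
        Set.ncard_le_ncard_of_injOn ψ hmem hinj (BC_finite Lu Rv Eu)
    _ ≤ g (Lu.card + Rv.card) := BC_ncard_le_g Lu Rv Eu hdisj' hEu_sub
    _ = g (L.card + R.card - 2) := by rw [hcard]

lemma main_v [DecidableEq V] (L R : Finset V) (E : Finset (V × V))
    (hdisj : Disjoint L R) (hE : E ⊆ L ×ˢ R) (u v : V) (hu : u ∈ L) (hv : v ∈ R)
    (he : (u, v) ∉ E) :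
    {B : Finset V × Finset V | IsMaximalBiclique L R E B ∧ v ∈ B.2}.ncard ≤
      g (L.card + R.card - 2) := by
  classical
  have hE' : E.image Prod.swap ⊆ R ×ˢ L := by
    intro p hp
    obtain ⟨q, hq, rfl⟩ := Finset.mem_image.mp hp
    have hqm := Finset.mem_product.mp (hE hq)
    exact Finset.mem_product.mpr ⟨hqm.2, hqm.1⟩
  have he' : (v, u) ∉ E.image Prod.swap := by
    intro h
    obtain ⟨q, hq, hqs⟩ := Finset.mem_image.mp h
    have : q = (u, v) := by
      have := congrArg Prod.swap hqs
      rwa [Prod.swap_swap] at this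
    exact he (this ▸ hq)
  have h := main_u R L (E.image Prod.swap) hdisj.symm hE' v u hv hu he'
  rw [add_comm R.card L.card] at h
  refine le_trans (Set.ncard_le_ncard_of_injOn (fun B => (B.2, B.1)) ?_ ?_ ?_) h
  · rintro ⟨X, Y⟩ ⟨hm, hvY⟩
    exact ⟨max_swap hm, hvY⟩
  · rintro ⟨X, Y⟩ _ ⟨X', Y'⟩ _ heq
    simp only [Prod.mk.injEq] at heq
    exact Prod.ext heq.2 heq.1
  · refine Set.Finite.subset (BC_finite R L (E.image Prod.swap)) ?_
    rintro B ⟨hm, _⟩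
    exact hm

end Aux

/-- For a bipartite graph `G` on `n ≥ 2` vertices and any edge `e = (u, v) ∉ E`, the number
of maximal bicliques of `G` subsumed by adding `e` is at most `2·g(n-2)`. -/
theorem stmt9 {V : Type*} [DecidableEq V] (L R : Finset V) (E : Finset (V × V))
    (hdisj : Disjoint L R) (hE : E ⊆ L ×ˢ R) (hn : 2 ≤ L.card + R.card)
    (u v : V) (hu : u ∈ L) (hv : v ∈ R) (he : (u, v) ∉ E) :
    (BC L R E \ BC L R (E ∪ {(u, v)})).ncard ≤ 2 * g (L.card + R.card - 2) := by
  classical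
  have hsub : BC L R E \ BC L R (E ∪ {(u, v)}) ⊆
      {B : Finset V × Finset V | IsMaximalBiclique L R E B ∧ u ∈ B.1} ∪
      {B : Finset V × Finset V | IsMaximalBiclique L R E B ∧ v ∈ B.2} := by
    rintro ⟨X, Y⟩ ⟨hmax, hnot⟩
    obtain ⟨⟨hXL, hYR, hadj⟩, hmaxp⟩ := hmax
    have hEsub : E ⊆ E ∪ {(u, v)} := Finset.subset_union_left
    have hbc' : IsBiclique L R (E ∪ {(u, v)}) (X, Y) :=
      ⟨hXL, hYR, fun x hx y hy => hEsub (hadj x hx y hy)⟩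
    have hnot' : ¬ ∀ B' : Finset V × Finset V, IsBiclique L R (E ∪ {(u, v)}) B' →
        X ⊆ B'.1 → Y ⊆ B'.2 → B' = (X, Y) := fun h => hnot ⟨hbc', h⟩
    push_neg at hnot'
    obtain ⟨⟨X', Y'⟩, ⟨hX'L, hY'R, hadj'⟩, h1, h2, hne⟩ := hnot'
    -- (X', Y') is not an E-biclique, so it uses the edge (u, v)
    have hnotE : ¬ ∀ x ∈ X', ∀ y ∈ Y', (x, y) ∈ E := by
      intro h
      exact hne (hmaxp (X', Y') ⟨hX'L, hY'R, h⟩ h1 h2)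
    push_neg at hnotE
    obtain ⟨x₁, hx₁, y₁, hy₁, hxy₁⟩ := hnotE
    have hxy₁' : (x₁, y₁) = (u, v) := by
      rcases Finset.mem_union.mp (hadj' x₁ hx₁ y₁ hy₁) with h | h
      · exact absurd h hxy₁
      · exact Finset.mem_singleton.mp h
    obtain ⟨hx₁u, hy₁v⟩ := Prod.ext_iff.mp hxy₁'
    have huX' : u ∈ X' := (show x₁ = u from hx₁u) ▸ hx₁
    have hvY' : v ∈ Y' := (show y₁ = v from hy₁v) ▸ hy₁
    by_contra hcon
    simp only [Set.mem_union, Set.mem_setOf_eq, not_or, not_and] at hcon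
    have huX : u ∉ X := hcon.1 ⟨⟨hXL, hYR, hadj⟩, hmaxp⟩
    have hvY : v ∉ Y := hcon.2 ⟨⟨hXL, hYR, hadj⟩, hmaxp⟩
    -- then (insert u X, Y) is an E-biclique strictly containing (X, Y)
    have hbig : IsBiclique L R E (insert u X, Y) := by
      refine ⟨Finset.insert_subset hu hXL, hYR, ?_⟩
      intro x hx y hy
      rcases Finset.mem_insert.mp hx with rfl | hx'
      · rcases Finset.mem_union.mp (hadj' x huX' y (h2 hy)) with h | h
        · exact h
        · exfalso
          have : y = v := congrArg Prod.snd (Finset.mem_singleton.mp h)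
          exact hvY (this ▸ hy)
      · exact hadj x hx' y hy
    have heq := hmaxp (insert u X, Y) hbig (Finset.subset_insert u X) (Finset.Subset.refl _)
    have : insert u X = X := congrArg Prod.fst heq
    exact huX (this ▸ Finset.mem_insert_self u X)
  have hfin : ({B : Finset V × Finset V | IsMaximalBiclique L R E B ∧ u ∈ B.1} ∪
      {B : Finset V × Finset V | IsMaximalBiclique L R E B ∧ v ∈ B.2}).Finite := by
    refine Set.Finite.subset (BC_finite L R E) ?_
    rintro B (⟨hm, _⟩ | ⟨hm, _⟩) <;> exact hm
  calc (BC L R E \ BC L R (E ∪ {(u, v)})).ncard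
      ≤ ({B : Finset V × Finset V | IsMaximalBiclique L R E B ∧ u ∈ B.1} ∪
         {B : Finset V × Finset V | IsMaximalBiclique L R E B ∧ v ∈ B.2}).ncard :=
        Set.ncard_le_ncard hsub hfin
    _ ≤ {B : Finset V × Finset V | IsMaximalBiclique L R E B ∧ u ∈ B.1}.ncard +
        {B : Finset V × Finset V | IsMaximalBiclique L R E B ∧ v ∈ B.2}.ncard :=
        Set.ncard_union_le _ _
    _ ≤ g (L.card + R.card - 2) + g (L.card + R.card - 2) :=
        add_le_add (main_u L R E hdisj hE u v hu hv he)
          (main_v L R E hdisj hE u v hu hv he)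
    _ = 2 * g (L.card + R.card - 2) := (two_mul _).symm
end
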